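/- arXiv:0801.2239 — 3 statements merged into one kernel-verified Lean document; each statement's English description precedes it below -/
import Mathlib

section
/- Suppose n ∈ M satisfies: (a) m₊ - n is a ℤ_{≥0}-linear combination of the monomials A_{i,k} (i ∈ {1,2,3}, k ∈ ℤ), and (b) n - m₄ is a nonzero ℤ_{≥0}-linear combination of the monomials A_{2,k} (k ∈ ℤ). Then n = m₄ + A_{2,2} (which equals m₅) or n = m₄ + 2·A_{2,2}. -/
/-!
Type C₃ monomial setting for the Frenkel–Mukhin algorithm counterexample
(Nakai–Nakanishi).  `M` is the free abelian group on `(Fin 3) × ℤ`, written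
additively; the generator `Y i k` stands for the variable `Y_{i+1, q^k}`.
(The index `i : Fin 3` with value `0, 1, 2` corresponds to the node
`1, 2, 3` of the Dynkin diagram of type C₃.)
-/

noncomputable section
open scoped Classical

namespace FMC3

/-- The free abelian group on `(Fin 3) × ℤ` (written additively): the group
of Laurent monomials in the variables `Y_{i,q^k}`. -/
abbrev M : Type := (Fin 3 × ℤ) →₀ ℤ

/-- The generator `Y_{i+1, q^k}`. -/
def Y (i : Fin 3) (k : ℤ) : M := Finsupp.single (i, k) 1

/-- The root monomial `A_{1,k}` of type C₃. -/
def A1 (k : ℤ) : M := Y 0 (k - 1) + Y 0 (k + 1) - Y 1 k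

/-- The root monomial `A_{2,k}` of type C₃. -/
def A2 (k : ℤ) : M := Y 1 (k - 1) + Y 1 (k + 1) - Y 0 k - Y 2 k

/-- The root monomial `A_{3,k}` of type C₃. -/
def A3 (k : ℤ) : M := Y 2 (k - 2) + Y 2 (k + 2) - Y 1 (k - 1) - Y 1 (k + 1)

/-- The root monomials, indexed by `Fin 3`. -/
def A : Fin 3 → ℤ → M := ![A1, A2, A3]

/-- `d i = d_{i+1}`: the numbers `d₁ = d₂ = 1`, `d₃ = 2`. -/
def d : Fin 3 → ℤ := ![1, 1, 2]

/-- The highest weight monomial `m₊ = Y_{1,q⁴} Y_{2,q} Y_{3,q⁻²}`. -/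
def mp : M := Y 0 4 + Y 1 1 + Y 2 (-2)

/-- `m₁ = m₊ - A_{3,0}`. -/
def m1 : M := mp - A 2 0

/-- `m₂ = m₊ - A_{3,0} - A_{2,2}`. -/
def m2 : M := mp - A 2 0 - A 1 2

/-- `m₃ = m₊ - A_{3,0} - 2·A_{2,2}`. -/
def m3 : M := mp - A 2 0 - (2 : ℤ) • A 1 2

/-- `m₄ = m₊ - A_{3,0} - 2·A_{2,2} - A_{1,3}`. -/
def m4 : M := mp - A 2 0 - (2 : ℤ) • A 1 2 - A 0 3

/-- `m₅ = m₊ - A_{3,0} - A_{2,2} - A_{1,3}`. -/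
def m5 : M := mp - A 2 0 - A 1 2 - A 0 3

/-- `m₆ = m₊ - A_{2,2}`. -/
def m6 : M := mp - A 1 2

/-- A monomial is dominant if all its exponents are nonnegative. -/
def Dominant (m : M) : Prop := ∀ p : Fin 3 × ℤ, 0 ≤ m p

/-- A monomial is `i`-dominant if all its `(i,k)`-exponents are nonnegative. -/
def IDominant (i : Fin 3) (m : M) : Prop := ∀ k : ℤ, 0 ≤ m (i, k)

/-- The `i`-projection of a monomial: the function `k ↦ (i,k)`-exponent. -/
def proj (i : Fin 3) (m : M) : ℤ → ℤ := fun k => m (i, k)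

/-- The `i`-q-string `Σ^i_{a,r} = {a + d_i (r + 1 - 2 j) : j = 1, …, r}`. -/
def stringFinset (i : Fin 3) (a : ℤ) (r : ℕ) : Finset ℤ :=
  (Finset.Icc 1 r).image fun j => a + d i * ((r : ℤ) + 1 - 2 * (j : ℤ))

/-- A finite set of integers is an `i`-q-string if it is of the form
`Σ^i_{a,r}` for some `a` and some `r ≥ 1`. -/
def IsString (i : Fin 3) (S : Finset ℤ) : Prop :=
  ∃ (a : ℤ) (r : ℕ), 1 ≤ r ∧ S = stringFinset i a r

/-- Two `i`-q-strings (given by their data `(a, r)`) are in general position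
if their union is not an `i`-q-string, or one is contained in the other. -/
def GenPos (i : Fin 3) (p q : ℤ × ℕ) : Prop :=
  ¬ IsString i (stringFinset i p.1 p.2 ∪ stringFinset i q.1 q.2) ∨
    stringFinset i p.1 p.2 ⊆ stringFinset i q.1 q.2 ∨
    stringFinset i q.1 q.2 ⊆ stringFinset i p.1 p.2

/-- The indicator function of the `i`-q-string `Σ^i_{a,r}`. -/
def stringInd (i : Fin 3) (a : ℤ) (r : ℕ) (k : ℤ) : ℤ :=
  if k ∈ stringFinset i a r then 1 else 0

/-- `L` (a list of data `(a,r)` of `i`-q-strings, a list standing for a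
multiset) is a string factorization of the `i`-dominant monomial `m`: all
strings have length `≥ 1`, they are pairwise in general position, and their
indicator functions sum to the `i`-projection of `m`. -/
def IsFactorization (i : Fin 3) (m : M) (L : List (ℤ × ℕ)) : Prop :=
  (∀ p ∈ L, 1 ≤ p.2) ∧ L.Pairwise (GenPos i) ∧
    ∀ k : ℤ, proj i m k = (L.map fun p => stringInd i p.1 p.2 k).sum

/-- The list, indexed by `p = 0, …, r`, of the sums
`Σ_{j=1}^{p} A_{i, a + d_i (r - 2 j + 2)}` attached to the `i`-q-string
`Σ^i_{a,r}`. -/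
def strOpts (i : Fin 3) (a : ℤ) (r : ℕ) : List M :=
  (List.range (r + 1)).map fun p =>
    ∑ j ∈ Finset.range p, A i (a + d i * ((r : ℤ) - 2 * (j : ℤ)))

/-- All sums of one choice from `strOpts` for each string in the list `L`. -/
def combos (i : Fin 3) : List (ℤ × ℕ) → Multiset M
  | [] => {0}
  | p :: L => (↑(strOpts i p.1 p.2) : Multiset M).bind fun x =>
      (combos i L).map fun y => x + y

/-- `μ` is the `i`-expansion multiset `μ_i(m)` of the `i`-dominant monomial
`m`: for some string factorization `L` of `m`, `μ` consists of the elements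
`m - Σ_t Σ_{j=1}^{p_t} A_{i, a_t + d_i (r_t - 2 j + 2)}`, one for each choice
of integers `0 ≤ p_t ≤ r_t`. -/
def IsExpansion (i : Fin 3) (m : M) (μ : Multiset M) : Prop :=
  ∃ L : List (ℤ × ℕ), IsFactorization i m L ∧
    μ = (combos i L).map fun x => m - x

end FMC3

/-! Subtracting the two hypotheses writes `m₊ - m₄ = A_{3,0} + 2·A_{2,2} + A_{1,3}` as a
`ℤ≥0`-combination of root monomials that contains the given combination of the `A_{2,k}`.
The root monomials are linearly independent: `A_{i,k}` has exponent `1` at `Y_{i,k+d_i}`,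
and no `A_{j,l}` with `(l, j) < (k, i)` lexicographically involves that variable. Comparing
coefficients, the `A_{2,k}`-combination is at most `2·A_{2,2}`, and being nonzero it is
`A_{2,2}` or `2·A_{2,2}`. -/

namespace FMC3

section Unitriangular

variable {ι κ α R : Type*} [LinearOrder α] [Ring R]

theorem linearIndependent_of_unitriangular (f : ι → κ →₀ R) (rank : ι → α)
    (h_rank : Function.Injective rank) (lead : ι → κ) (h_lead : ∀ i, f i (lead i) = 1)
    (h_lower : ∀ i j, rank j < rank i → f j (lead i) = 0) :
    LinearIndependent R f := by
  let _ : LinearOrder ι := LinearOrder.lift' rank h_rank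
  rw [linearIndependent_iff]
  intro l hl
  by_contra hne
  have hsupp := Finsupp.support_nonempty_iff.mpr hne
  set i := l.support.max' hsupp
  have hcoeff : Finsupp.linearCombination R f l (lead i) = l i := by
    rw [Finsupp.linearCombination_apply, Finsupp.sum, Finsupp.finsetSum_apply,
      Finset.sum_eq_single i]
    · simp [h_lead]
    · intro j hj hji
      have hlt : j < i := lt_of_le_of_ne (l.support.le_max' j hj) hji
      simp [h_lower i j hlt]
    · intro hi
      simp [Finsupp.notMem_support_iff.mp hi]
  rw [hl, Finsupp.coe_zero, Pi.zero_apply] at hcoeff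
  exact Finsupp.mem_support_iff.mp (l.support.max'_mem hsupp) hcoeff.symm

end Unitriangular

theorem A_apply_lead (i : Fin 3) (k : ℤ) : A i k (i, k + d i) = 1 := by
  fin_cases i <;> simp [A, A1, A2, A3, d, Y, Finsupp.single_apply] <;> omega

theorem A_apply_lead_of_lt {i j : Fin 3} {k l : ℤ} (h : toLex (l, j) < toLex (k, i)) :
    A j l (i, k + d i) = 0 := by
  rw [Prod.Lex.toLex_lt_toLex] at h
  fin_cases i <;> fin_cases j <;> simp [A, A1, A2, A3, d, Y, Finsupp.single_apply] at h ⊢ <;> omega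

theorem linearIndependent_A : LinearIndependent ℤ fun p : Fin 3 × ℤ => A p.1 p.2 :=
  linearIndependent_of_unitriangular _ (fun p => toLex (p.2, p.1))
    (fun p q h => by simpa [Prod.ext_iff, and_comm] using h) (fun p => (p.1, p.2 + d p.1))
    (fun p => A_apply_lead p.1 p.2) (fun _ _ h => A_apply_lead_of_lt h)

theorem sum_natCast_smul_eq_linearCombination {ι G : Type*} [AddCommGroup G] (f : ι → G)
    (c : ι →₀ ℕ) : (c.sum fun i v => (v : ℤ) • f i) = Finsupp.linearCombination ℕ f c := by
  simp [Finsupp.linearCombination_apply, natCast_zsmul]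

theorem mp_sub_m4 :
    mp - m4 = Finsupp.linearCombination ℕ (fun p : Fin 3 × ℤ => A p.1 p.2)
      (Finsupp.single (2, 0) 1 + Finsupp.single (1, 2) 2 + Finsupp.single (0, 3) 1) := by
  simp only [m4, two_smul, map_add, Finsupp.linearCombination_single, one_smul]
  abel

theorem m4_add_A_eq_m5 : m4 + A 1 2 = m5 := by
  simp only [m4, m5, two_smul]
  abel

theorem le_single_of_add_eq_mp_sub_m4 (c : (Fin 3 × ℤ) →₀ ℕ) (b : ℤ →₀ ℕ)
    (h : Finsupp.linearCombination ℕ (fun p : Fin 3 × ℤ => A p.1 p.2) c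
      + Finsupp.linearCombination ℕ (A 1) b = mp - m4) :
    b ≤ Finsupp.single 2 2 := by
  let e := Function.Embedding.sectR (1 : Fin 3) ℤ
  have hcoeff : c + b.embDomain e =
      Finsupp.single (2, 0) 1 + Finsupp.single (1, 2) 2 + Finsupp.single (0, 3) 1 := by
    apply linearIndependent_A.restrict_scalars' ℕ
    rw [← mp_sub_m4, ← h, map_add, Finsupp.linearCombination_embDomain]
    rfl
  intro k
  have hk : c (1, k) + b k = Finsupp.single 2 2 k := by
    have := congrArg (· (e k)) hcoeff
    rw [Finsupp.add_apply, Finsupp.embDomain_apply_self] at this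
    simpa [e, Finsupp.single_apply] using this
  exact hk ▸ Nat.le_add_left _ _

/-- If `n ∈ M` is such that (a) `m₊ - n` is a
`ℤ≥0`-linear combination of the root monomials `A_{i,k}` and (b) `n - m₄` is
a nonzero `ℤ≥0`-linear combination of the root monomials `A_{2,k}`, then
`n = m₄ + A_{2,2}` (which equals `m₅`) or `n = m₄ + 2·A_{2,2}`. -/
theorem ancestors_of_m4 (n : M)
    (ha : ∃ c : (Fin 3 × ℤ) →₀ ℕ, mp - n = c.sum fun p v => (v : ℤ) • A p.1 p.2)
    (hb : ∃ c : ℤ →₀ ℕ, c ≠ 0 ∧ n - m4 = c.sum fun k v => (v : ℤ) • A 1 k) :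
    (n = m4 + A 1 2 ∨ n = m4 + (2 : ℤ) • A 1 2) ∧ m4 + A 1 2 = m5 := by
  obtain ⟨c, hc⟩ := ha
  obtain ⟨b, hb0, hb⟩ := hb
  rw [sum_natCast_smul_eq_linearCombination] at hc hb
  have hle : b ≤ Finsupp.single 2 2 :=
    le_single_of_add_eq_mp_sub_m4 c b (by rw [← hc, ← hb, sub_add_sub_cancel])
  have hb_single : b = Finsupp.single 2 (b 2) :=
    Finsupp.support_subset_singleton.mp
      ((Finsupp.support_mono hle).trans Finsupp.support_single_subset)
  have hb2 : b 2 = 1 ∨ b 2 = 2 := by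
    have h_le : b 2 ≤ 2 := by simpa using hle 2
    have h_ne : b 2 ≠ 0 := fun h => hb0 (by rw [hb_single, h, Finsupp.single_zero])
    omega
  rw [hb_single, Finsupp.linearCombination_single, sub_eq_iff_eq_add'] at hb
  refine ⟨?_, m4_add_A_eq_m5⟩
  rcases hb2 with h | h <;> rw [h] at hb
  · exact Or.inl (by simpa using hb)
  · exact Or.inr (by rw [hb, ← natCast_zsmul]; rfl)

end FMC3
end
end

section
/- Let m₅' = m₄ + 2·A_{2,2}. Then m₅' is 2-dominant with 2-projection π₂(m₅') = 𝟙_{-1} + 2·𝟙_{1} + 𝟙_{3}, whose string factorization consists of the two 2-q-strings Σ²_{1,3} = {-1, 1, 3} and Σ²_{1,1} = {1} (which are in general position), and the monomial m₄ does NOT belong to the 2-expansion multiset μ₂(m₅'). -/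
/-!
Type C₃ monomial setting for the Frenkel–Mukhin algorithm counterexample
(Nakai–Nakanishi).  `M` is the free abelian group on `(Fin 3) × ℤ`, written
additively; the generator `Y i k` stands for the variable `Y_{i+1, q^k}`.
(The index `i : Fin 3` with value `0, 1, 2` corresponds to the node
`1, 2, 3` of the Dynkin diagram of type C₃.)
-/

noncomputable section
open scoped Classical

/-! Each element of `strOpts 1 a r` is a sum `A_{2,a+r} + A_{2,a+r-2} + ⋯` running down from
the top of the string, so its `Y_{1,·}`-exponents are minus the indicator of a progression of
step 2 whose largest element is `a + r`; hence `x ↦ x(1,k+2) - x(1,k)` is at most the number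
of strings with `a + r = k`, for every `x` in `combos 1 L`. If `m₄ = m₅' - x`, then
`x = 2·A_{2,2}` has `Y_{1,2}`-exponent `-2` and `Y_{1,4}`-exponent `0`, so at least two strings
of the factorization have top element `1`. Counting multiplicities against
`π₂(m₅') = 𝟙_{-1} + 2·𝟙_1 + 𝟙_3` then forces both `Σ²_{1,1} = {1}` and `Σ²_{3,1} = {3}` into
the factorization, and these are not in general position since `{1, 3} = Σ²_{2,2}`. -/

theorem List.countP_add_countP_le {α : Type*} {l : List α} {p q r : α → Bool}
    (hp : ∀ x ∈ l, p x → r x) (hq : ∀ x ∈ l, q x → r x) (hpq : ∀ x ∈ l, p x → ¬q x) :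
    l.countP p + l.countP q ≤ l.countP r := by
  induction l with
  | nil => simp
  | cons a l ih =>
    simp only [List.mem_cons, forall_eq_or_imp] at hp hq hpq
    simp only [List.countP_cons]
    have := ih hp.2 hq.2 hpq.2
    split_ifs <;> simp_all <;> omega

namespace FMC3

theorem mem_stringFinset_one_iff {a k : ℤ} {r : ℕ} :
    k ∈ stringFinset 1 a r ↔ a - r < k ∧ k < a + r ∧ 2 ∣ a + r - 1 - k := by
  simp only [stringFinset, Finset.pure_def, Finset.bind_def, Finset.sup_singleton_apply,
    Finset.mem_image, Finset.mem_Icc, exists_exists_and_eq_and]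
  constructor
  · rintro ⟨j, ⟨hj1, hjr⟩, rfl⟩
    simp only [d, Matrix.cons_val_one, Matrix.cons_val_zero]
    omega
  · rintro ⟨hlo, hhi, ⟨c, hc⟩⟩
    refine ⟨(c + 1).toNat, ⟨by omega, by omega⟩, ?_⟩
    simp only [d, Matrix.cons_val_one, Matrix.cons_val_zero]
    omega

theorem sum_stringInd_eq_countP (i : Fin 3) (L : List (ℤ × ℕ)) (k : ℤ) :
    (L.map fun p => stringInd i p.1 p.2 k).sum =
      L.countP (fun p => k ∈ stringFinset i p.1 p.2) := by
  induction L with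
  | nil => simp
  | cons p L ih =>
    rw [List.map_cons, List.sum_cons, List.countP_cons, ih, stringInd]
    split_ifs <;> simp_all [add_comm]

theorem IsFactorization.countP_mem_eq_proj {i : Fin 3} {m : M} {L : List (ℤ × ℕ)}
    (hL : IsFactorization i m L) (k : ℤ) :
    (L.countP (fun p => k ∈ stringFinset i p.1 p.2) : ℤ) = proj i m k := by
  rw [hL.2.2 k, sum_stringInd_eq_countP]

theorem GenPos.symm {i : Fin 3} {p q : ℤ × ℕ} (h : GenPos i p q) : GenPos i q p := by
  rcases h with h | h | h
  · exact Or.inl (by rwa [Finset.union_comm])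
  · exact Or.inr (Or.inr h)
  · exact Or.inr (Or.inl h)

instance (i : Fin 3) : Std.Symm (GenPos i) := ⟨fun _ _ => GenPos.symm⟩

theorem A_one_apply_zero (m k : ℤ) : A 1 m (0, k) = -if m = k then 1 else 0 := by
  simp only [A, A2, Y, Matrix.cons_val_one, Matrix.cons_val_zero, Finsupp.coe_sub,
    Finsupp.coe_add, Pi.sub_apply, Pi.add_apply, Finsupp.single_apply, Prod.ext_iff]
  split_ifs <;> simp_all

theorem strOpts_one_apply_zero_sub_le {a k : ℤ} {r : ℕ} {u : M} (hu : u ∈ strOpts 1 a r) :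
    u (0, k + 2) - u (0, k) ≤ if a + r = k then 1 else 0 := by
  obtain ⟨p, -, rfl⟩ := List.mem_map.1 hu
  set f : ℕ → ℤ := fun j => if a + r - 2 * j = k then 1 else 0
  have htelescope : ∀ j : ℕ,
      A 1 (a + d 1 * (r - 2 * j)) (0, k + 2) - A 1 (a + d 1 * (r - 2 * j)) (0, k) =
        f j - f (j + 1) := by
    intro j
    simp only [A_one_apply_zero, f, d, Matrix.cons_val_one, Matrix.cons_val_zero]
    push_cast
    split_ifs <;> omega
  rw [Finsupp.finsetSum_apply, Finsupp.finsetSum_apply, ← Finset.sum_sub_distrib,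
    Finset.sum_congr rfl fun j _ => htelescope j, Finset.sum_range_sub']
  simp only [f]
  split_ifs <;> simp_all

theorem combos_one_apply_zero_sub_le (L : List (ℤ × ℕ)) (k : ℤ) {x : M} (hx : x ∈ combos 1 L) :
    x (0, k + 2) - x (0, k) ≤ L.countP (fun p => p.1 + (p.2 : ℤ) = k) := by
  induction L generalizing x with
  | nil =>
    rw [combos, Multiset.mem_singleton] at hx
    simp [hx]
  | cons p L ih =>
    obtain ⟨u, hu, y, hy, rfl⟩ : ∃ u ∈ strOpts 1 p.1 p.2, ∃ y ∈ combos 1 L, u + y = x := by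
      simpa [combos] using hx
    have hu' := strOpts_one_apply_zero_sub_le (k := k) hu
    have hy' := ih hy
    rw [List.countP_cons]
    simp only [Finsupp.coe_add, Pi.add_apply, decide_eq_true_eq] at *
    split_ifs at * <;> push_cast <;> omega

theorem m4_add_two_smul_A_one_two :
    m4 + (2 : ℤ) • A 1 2 = Y 1 (-1) + (2 : ℤ) • Y 1 1 + Y 1 3 - Y 0 2 - Y 2 2 := by
  simp only [m4, mp, A, A1, A2, A3, Matrix.cons_val_zero, Matrix.cons_val_one,
    Matrix.cons_val_two, Matrix.tail_cons, Matrix.head_cons]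
  norm_num
  abel

theorem proj_m4_add_two_smul_A_one_two : proj 1 (m4 + (2 : ℤ) • A 1 2) = fun k : ℤ =>
    (if k = -1 then 1 else 0) + 2 * (if k = 1 then 1 else 0) + (if k = 3 then 1 else 0) := by
  funext k
  simp only [proj, m4_add_two_smul_A_one_two, Y, Finsupp.coe_sub, Finsupp.coe_add,
    Finsupp.coe_smul, Pi.sub_apply, Pi.add_apply, Pi.smul_apply, Finsupp.single_apply,
    Prod.ext_iff, smul_eq_mul]
  norm_num
  split_ifs <;> omega

theorem isFactorization_m4_add_two_smul_A_one_two :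
    IsFactorization 1 (m4 + (2 : ℤ) • A 1 2) [(1, 3), (1, 1)] := by
  refine ⟨by simp, List.pairwise_pair.2 (Or.inr (Or.inr ?_)), fun k => ?_⟩
  · intro k
    simp only [mem_stringFinset_one_iff]
    omega
  · simp only [proj_m4_add_two_smul_A_one_two, List.map_cons, List.map_nil, List.sum_cons,
      List.sum_nil, stringInd, mem_stringFinset_one_iff]
    push_cast
    split_ifs <;> omega

theorem not_genPos_one_one_three_one : ¬GenPos 1 (1, 1) (3, 1) := by
  have h11 : (1 : ℤ) ∈ stringFinset 1 1 1 := by rw [mem_stringFinset_one_iff]; omega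
  have h31 : (3 : ℤ) ∈ stringFinset 1 3 1 := by rw [mem_stringFinset_one_iff]; omega
  simp only [GenPos, not_or, not_not]
  refine ⟨⟨2, 2, by norm_num, ?_⟩, fun h => ?_, fun h => ?_⟩
  · ext k
    simp only [Finset.mem_union, mem_stringFinset_one_iff]
    omega
  · have := h h11
    rw [mem_stringFinset_one_iff] at this
    omega
  · have := h h31
    rw [mem_stringFinset_one_iff] at this
    omega

theorem one_one_mem_of_isFactorization {L : List (ℤ × ℕ)}
    (hL : IsFactorization 1 (m4 + (2 : ℤ) • A 1 2) L)
    (htop : 2 ≤ L.countP (fun p => p.1 + (p.2 : ℤ) = 2)) : ((1 : ℤ), 1) ∈ L := by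
  by_contra hn
  have hle : L.countP (fun p => p.1 + (p.2 : ℤ) = 2) ≤
      L.countP (fun p => -1 ∈ stringFinset 1 p.1 p.2) := by
    refine List.countP_mono_left fun p hp htop => ?_
    have hr := hL.1 p hp
    have hp1 : p ≠ (1, 1) := fun h => hn (h ▸ hp)
    simp only [decide_eq_true_eq, mem_stringFinset_one_iff, ne_eq, Prod.ext_iff] at htop hp1 ⊢
    omega
  have := hL.countP_mem_eq_proj (-1)
  rw [proj_m4_add_two_smul_A_one_two] at this
  norm_num at this
  omega

theorem three_one_mem_of_isFactorization {L : List (ℤ × ℕ)}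
    (hL : IsFactorization 1 (m4 + (2 : ℤ) • A 1 2) L)
    (htop : 2 ≤ L.countP (fun p => p.1 + (p.2 : ℤ) = 2)) : ((3 : ℤ), 1) ∈ L := by
  have hcount := hL.countP_mem_eq_proj
  simp only [proj_m4_add_two_smul_A_one_two] at hcount
  have hcount1 := hcount 1
  have hcount3 := hcount 3
  have hcount5 := hcount 5
  norm_num only [if_true, if_false] at hcount1 hcount3 hcount5
  obtain ⟨q, hq, h3⟩ := List.countP_pos_iff.1
    (by omega : 0 < L.countP fun p => (3 : ℤ) ∈ stringFinset 1 p.1 p.2)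
  have h5 := List.countP_eq_zero.1
    (by omega : L.countP (fun p => (5 : ℤ) ∈ stringFinset 1 p.1 p.2) = 0) q hq
  have h1 : (1 : ℤ) ∉ stringFinset 1 q.1 q.2 := by
    intro h1
    have hle := List.countP_add_countP_le (l := L) (p := fun p => p.1 + (p.2 : ℤ) = 2)
      (q := fun p => 3 ∈ stringFinset 1 p.1 p.2 ∧ 1 ∈ stringFinset 1 p.1 p.2)
      (r := fun p => 1 ∈ stringFinset 1 p.1 p.2)
      (fun p hp h => by
        have := hL.1 p hp
        simp only [decide_eq_true_eq, mem_stringFinset_one_iff] at h ⊢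
        omega)
      (fun p _ h => by simp_all)
      (fun p _ h => by
        simp only [decide_eq_true_eq, mem_stringFinset_one_iff] at h ⊢
        omega)
    have hpos : 0 < L.countP
        (fun p => 3 ∈ stringFinset 1 p.1 p.2 ∧ (1 : ℤ) ∈ stringFinset 1 p.1 p.2) :=
      List.countP_pos_iff.2 ⟨q, hq, by simp_all⟩
    omega
  simp only [decide_eq_true_eq, mem_stringFinset_one_iff] at h1 h3 h5
  obtain ⟨a, r⟩ := q
  obtain ⟨rfl, rfl⟩ : a = 3 ∧ r = 1 := by simp only at h1 h3 h5; omega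
  exact hq

theorem m4_not_mem_of_isExpansion {μ : Multiset M}
    (hμ : IsExpansion 1 (m4 + (2 : ℤ) • A 1 2) μ) : m4 ∉ μ := by
  intro hm
  obtain ⟨L, hL, rfl⟩ := hμ
  obtain ⟨x, hx, hxm⟩ := Multiset.mem_map.1 hm
  obtain rfl : x = (2 : ℤ) • A 1 2 := by
    rw [sub_eq_iff_eq_add, add_right_inj] at hxm
    exact hxm.symm
  have htop : 2 ≤ L.countP (fun p => p.1 + (p.2 : ℤ) = 2) := by
    have := combos_one_apply_zero_sub_le L 2 hx
    simp only [Finsupp.smul_apply, A_one_apply_zero, smul_eq_mul] at this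
    norm_num at this
    omega
  exact not_genPos_one_one_three_one <| hL.2.1.forall
    (one_one_mem_of_isFactorization hL htop) (three_one_mem_of_isFactorization hL htop)
    (by decide)

/-- Let `m₅' = m₄ + 2·A_{2,2}`.  Then `m₅'` is `2`-dominant
with `2`-projection `𝟙_{-1} + 2·𝟙_{1} + 𝟙_{3}`, whose string factorization
consists of the two `2`-q-strings `Σ²_{1,3} = {-1,1,3}` and `Σ²_{1,1} = {1}`
(which are in general position), and `m₄` does NOT belong to the
`2`-expansion multiset `μ₂(m₅')`. -/
theorem m4_not_in_expansion_of_m5' :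
    IDominant 1 (m4 + (2 : ℤ) • A 1 2) ∧
    (proj 1 (m4 + (2 : ℤ) • A 1 2) = fun k : ℤ =>
      (if k = -1 then 1 else 0) + 2 * (if k = 1 then 1 else 0) +
        (if k = 3 then 1 else 0)) ∧
    stringFinset 1 1 3 = ({-1, 1, 3} : Finset ℤ) ∧
    stringFinset 1 1 1 = ({1} : Finset ℤ) ∧
    GenPos 1 (1, 3) (1, 1) ∧
    IsFactorization 1 (m4 + (2 : ℤ) • A 1 2) [(1, 3), (1, 1)] ∧
    (∀ μ : Multiset M, IsExpansion 1 (m4 + (2 : ℤ) • A 1 2) μ → m4 ∉ μ) := by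
  have hfact := isFactorization_m4_add_two_smul_A_one_two
  refine ⟨fun k => ?_, proj_m4_add_two_smul_A_one_two, ?_, ?_, List.pairwise_pair.1 hfact.2.1,
    hfact, fun μ => m4_not_mem_of_isExpansion⟩
  · rw [← proj, proj_m4_add_two_smul_A_one_two]
    positivity
  all_goals
    ext k
    simp only [mem_stringFinset_one_iff, Finset.mem_insert, Finset.mem_singleton]
    omega

end FMC3
end
end

section
/- The monomial m₃ is 1-dominant with 1-projection π₁(m₃) = 2·𝟙_{2} + 𝟙_{4}, whose string factorization consists of the two 1-q-strings Σ¹_{3,2} = {2, 4} and Σ¹_{2,1} = {2} (in general position); consequently the 1-expansion multiset μ₁(m₃) is the six-element multiset {m₃, m₃ - A_{1,5}, m₃ - A_{1,3} - A_{1,5} (with multiplicity 2), m₃ - A_{1,3}, m₃ - 2·A_{1,3} - A_{1,5}}; in particular m₄ = m₃ - A_{1,3} belongs to μ₁(m₃). -/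
/-!
Type C₃ monomial setting for the Frenkel–Mukhin algorithm counterexample
(Nakai–Nakanishi).  `M` is the free abelian group on `(Fin 3) × ℤ`, written
additively; the generator `Y i k` stands for the variable `Y_{i+1, q^k}`.
(The index `i : Fin 3` with value `0, 1, 2` corresponds to the node
`1, 2, 3` of the Dynkin diagram of type C₃.)
-/

noncomputable section
open scoped Classical

/-!
The `1`-projection of `m₃` is `2·𝟙_{2} + 𝟙_{4}`, and a string occurring in a factorization lies
in its support `{2, 4}`, so it is `{2}`, `{4}` or `{2, 4}`. Comparing multiplicities at `2` and
`4` leaves `{2, 4} + {2}` and `{2} + {2} + {4}`; the second is not in general position, since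
`{2} ∪ {4} = {2, 4}` is a string. The expansion multiset only depends on the factorization up
to permutation, so it is computed from `{2, 4} + {2}`.
-/

theorem List.sum_map_eq_sum_count {ι N : Type*} [BEq ι] [LawfulBEq ι] [AddCommMonoid N]
    {l : List ι} {s : Finset ι} (h : ∀ x ∈ l, x ∈ s) (f : ι → N) :
    (l.map f).sum = ∑ x ∈ s, l.count x • f x := by
  classical
  obtain rfl := lawful_beq_subsingleton ‹BEq ι› instBEqOfDecidableEq
  rw [Finset.sum_list_map_count]
  refine Finset.sum_subset (fun x hx => h x (List.mem_toFinset.1 hx)) fun x _ hx => ?_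
  rw [List.count_eq_zero_of_not_mem (mt List.mem_toFinset.2 hx), zero_smul]

namespace FMC3

theorem mem_stringFinset {i : Fin 3} {a k : ℤ} {r : ℕ} :
    k ∈ stringFinset i a r ↔ ∃ j : ℕ, 1 ≤ j ∧ j ≤ r ∧ k = a + d i * ((r : ℤ) + 1 - 2 * j) := by
  simp [stringFinset, eq_comm, and_assoc]

theorem stringFinset_one (i : Fin 3) (a : ℤ) : stringFinset i a 1 = {a} := by
  simp [stringFinset]

theorem stringFinset_two (i : Fin 3) (a : ℤ) : stringFinset i a 2 = {a + d i, a - d i} := by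
  ext k
  simp only [mem_stringFinset, Finset.mem_insert, Finset.mem_singleton]
  constructor
  · rintro ⟨j, h1, h2, rfl⟩
    interval_cases j
    · left; push_cast; ring
    · right; push_cast; ring
  · rintro (rfl | rfl)
    · exact ⟨1, by norm_num, by norm_num, by push_cast; ring⟩
    · exact ⟨2, by norm_num, le_rfl, by push_cast; ring⟩

theorem one_le_proj_of_mem_stringFinset {i : Fin 3} {m : M} {L : List (ℤ × ℕ)}
    (hL : IsFactorization i m L) {p : ℤ × ℕ} (hp : p ∈ L) {k : ℤ}
    (hk : k ∈ stringFinset i p.1 p.2) : 1 ≤ proj i m k := by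
  rw [hL.2.2 k]
  refine le_of_eq_of_le (if_pos hk).symm (List.single_le_sum (fun x hx => ?_) _
    (List.mem_map_of_mem hp))
  obtain ⟨q, -, rfl⟩ := List.mem_map.1 hx
  unfold stringInd
  split_ifs <;> norm_num

theorem combos_cons_cons (i : Fin 3) (p q : ℤ × ℕ) (L : List (ℤ × ℕ)) :
    combos i (p :: q :: L) = combos i (q :: p :: L) := by
  simp only [combos, Multiset.map_bind, Multiset.map_map, Function.comp_def]
  rw [Multiset.bind_bind]
  simp only [add_left_comm]

theorem combos_perm (i : Fin 3) {L L' : List (ℤ × ℕ)} (h : L.Perm L') :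
    combos i L = combos i L' := by
  induction h with
  | nil => rfl
  | cons p _ ih => simp only [combos, ih]
  | swap p q L => exact combos_cons_cons i q p L
  | trans _ _ ih₁ ih₂ => exact ih₁.trans ih₂

theorem stringFinset_zero_three_two : stringFinset 0 3 2 = {2, 4} := by
  rw [stringFinset_two, Finset.pair_comm]
  rfl

theorem genPos_zero_three_two_two_one : GenPos 0 (3, 2) (2, 1) :=
  Or.inr (Or.inr (by rw [stringFinset_zero_three_two, stringFinset_one]; decide))

theorem not_genPos_zero_two_one_four_one : ¬ GenPos 0 (2, 1) (4, 1) := by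
  simp only [GenPos, stringFinset_one, not_or]
  refine ⟨not_not.2 ⟨3, 2, one_le_two, ?_⟩, by decide, by decide⟩
  rw [stringFinset_zero_three_two]
  rfl

theorem eq_of_stringFinset_zero_subset {a : ℤ} {r : ℕ} (hr : 1 ≤ r)
    (h : stringFinset 0 a r ⊆ {2, 4}) : (a, r) = (2, 1) ∨ (a, r) = (4, 1) ∨ (a, r) = (3, 2) := by
  have hfirst := h (mem_stringFinset.2 ⟨1, le_rfl, hr, rfl⟩)
  have hlast := h (mem_stringFinset.2 ⟨r, hr, le_rfl, rfl⟩)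
  simp only [Finset.mem_insert, Finset.mem_singleton, d, Matrix.cons_val_zero] at hfirst hlast
  simp only [Prod.ext_iff]
  omega

theorem m3_eq : m3 = (2 : ℤ) • Y 0 2 + Y 0 4 + Y 1 (-1) - (2 : ℤ) • Y 1 3 + Y 2 2 := by
  simp only [m3, mp, A, A2, A3, Matrix.cons_val, Int.reduceSub, Int.reduceAdd, zero_sub, zero_add]
  abel

theorem proj_zero_m3 (k : ℤ) :
    proj 0 m3 k = 2 * (if k = 2 then 1 else 0) + (if k = 4 then 1 else 0) := by
  simp [proj, m3_eq, Y, Finsupp.single_apply, eq_comm]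

theorem mem_factorization_m3 {L : List (ℤ × ℕ)} (hL : IsFactorization 0 m3 L) {p : ℤ × ℕ}
    (hp : p ∈ L) : p = (2, 1) ∨ p = (4, 1) ∨ p = (3, 2) := by
  refine eq_of_stringFinset_zero_subset (hL.1 p hp) fun k hk => ?_
  have := one_le_proj_of_mem_stringFinset hL hp hk
  rw [proj_zero_m3] at this
  simp only [Finset.mem_insert, Finset.mem_singleton]
  split_ifs at this <;> omega

theorem factorization_m3_perm {L : List (ℤ × ℕ)} (hL : IsFactorization 0 m3 L) :
    L.Perm [(3, 2), (2, 1)] := by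
  set T : Finset (ℤ × ℕ) := {(2, 1), (4, 1), (3, 2)}
  have hT : ∀ p ∈ L, p ∈ T := fun p hp => by simpa [T] using mem_factorization_m3 hL hp
  have h2 : (L.count (2, 1) + L.count (3, 2) : ℤ) = 2 := by
    simpa [T, stringInd, stringFinset_one, stringFinset_zero_three_two, proj_zero_m3,
      List.sum_map_eq_sum_count hT] using (hL.2.2 2).symm
  have h4 : (L.count (4, 1) + L.count (3, 2) : ℤ) = 1 := by
    simpa [T, stringInd, stringFinset_one, stringFinset_zero_three_two, proj_zero_m3,
      List.sum_map_eq_sum_count hT] using (hL.2.2 4).symm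
  have h32 : L.count (3, 2) = 1 := by
    by_contra h
    have h21 : (2, 1) ∈ L := List.count_pos_iff.1 (by omega)
    have h41 : (4, 1) ∈ L := List.count_pos_iff.1 (by omega)
    exact not_genPos_zero_two_one_four_one (hL.2.1.forall h21 h41 (by decide))
  rw [List.perm_iff_count]
  intro x
  by_cases hx : x ∈ T
  · simp only [T, Finset.mem_insert, Finset.mem_singleton] at hx
    rcases hx with rfl | rfl | rfl <;>
      simp only [List.count_cons, List.count_nil, beq_iff_eq, Prod.mk.injEq] <;> split_ifs <;> omega
  · rw [List.count_eq_zero_of_not_mem (mt (hT x) hx), eq_comm, List.count_eq_zero_of_not_mem]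
    simp only [T, Finset.mem_insert, Finset.mem_singleton, not_or] at hx
    simp [hx.1, hx.2.2]

theorem isFactorization_m3 : IsFactorization 0 m3 [(3, 2), (2, 1)] := by
  refine ⟨by simp, by simpa using genPos_zero_three_two_two_one, fun k => ?_⟩
  simp only [proj_zero_m3, List.map_cons, List.map_nil, List.sum_cons, List.sum_nil, stringInd,
    stringFinset_zero_three_two, stringFinset_one, Finset.mem_insert, Finset.mem_singleton,
    add_zero]
  split_ifs <;> omega

theorem strOpts_zero_three_two : strOpts 0 3 2 = [0, A 0 5, A 0 5 + A 0 3] := by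
  simp [strOpts, d, List.range_succ, Finset.sum_range_succ]

theorem strOpts_zero_two_one : strOpts 0 2 1 = [0, A 0 3] := by
  simp [strOpts, d, List.range_succ]

theorem map_sub_combos_m3 :
    (combos 0 [(3, 2), (2, 1)]).map (m3 - ·) = {m3, m3 - A 0 5, m3 - A 0 3 - A 0 5,
      m3 - A 0 3 - A 0 5, m3 - A 0 3, m3 - (2 : ℤ) • A 0 3 - A 0 5} := by
  simp only [combos, strOpts_zero_three_two, strOpts_zero_two_one, ← Multiset.cons_coe,
    Multiset.coe_nil, Multiset.cons_zero, Multiset.cons_bind, Multiset.singleton_bind,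
    Multiset.bind_cons, Multiset.bind_singleton, Multiset.map_cons, Multiset.map_singleton,
    Multiset.singleton_add, Multiset.add_cons, Multiset.cons_add, Multiset.insert_eq_cons,
    add_zero, zero_add, sub_zero]
  -- once `abel_nf` has normalized the elements, `cons_swap` sorts both sides in the same order
  abel_nf
  simp only [Multiset.cons_swap]

/-- The monomial `m₃` is `1`-dominant with `1`-projection
`π₁(m₃) = 2·𝟙_{2} + 𝟙_{4}`, whose string factorization consists of the two
`1`-q-strings `Σ¹_{3,2} = {2,4}` and `Σ¹_{2,1} = {2}` (in general position);
consequently the `1`-expansion multiset `μ₁(m₃)` is the six-element multiset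
`{m₃, m₃ - A_{1,5}, m₃ - A_{1,3} - A_{1,5} (twice), m₃ - A_{1,3},
m₃ - 2·A_{1,3} - A_{1,5}}`; in particular `m₄ = m₃ - A_{1,3}` belongs to
`μ₁(m₃)`. -/
theorem expansion1_of_m3 :
    IDominant 0 m3 ∧
    (proj 0 m3 = fun k : ℤ =>
      2 * (if k = 2 then 1 else 0) + (if k = 4 then 1 else 0)) ∧
    stringFinset 0 3 2 = ({2, 4} : Finset ℤ) ∧
    stringFinset 0 2 1 = ({2} : Finset ℤ) ∧
    GenPos 0 (3, 2) (2, 1) ∧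
    IsFactorization 0 m3 [(3, 2), (2, 1)] ∧
    (∀ μ : Multiset M, IsExpansion 0 m3 μ ↔
      μ = ({m3, m3 - A 0 5, m3 - A 0 3 - A 0 5, m3 - A 0 3 - A 0 5,
            m3 - A 0 3, m3 - (2 : ℤ) • A 0 3 - A 0 5} : Multiset M)) ∧
    m4 = m3 - A 0 3 ∧
    m4 ∈ ({m3, m3 - A 0 5, m3 - A 0 3 - A 0 5, m3 - A 0 3 - A 0 5,
            m3 - A 0 3, m3 - (2 : ℤ) • A 0 3 - A 0 5} : Multiset M) := by
  have hm4 : m4 = m3 - A 0 3 := rfl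
  refine ⟨fun k => ?_, funext proj_zero_m3, stringFinset_zero_three_two, stringFinset_one 0 2,
    genPos_zero_three_two_two_one, isFactorization_m3, fun μ => ⟨?_, ?_⟩, hm4, by simp [hm4]⟩
  · have h := proj_zero_m3 k
    unfold proj at h
    split_ifs at h <;> omega
  · rintro ⟨L, hL, rfl⟩
    rw [combos_perm 0 (factorization_m3_perm hL), map_sub_combos_m3]
  · rintro rfl
    exact ⟨_, isFactorization_m3, map_sub_combos_m3.symm⟩

end FMC3
end
end
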